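/- arXiv:1410.7626 — 2 statements merged into one kernel-verified Lean document; each statement's English description precedes it below -/
import Mathlib

section
/- Let V = a e₁ for some a ∈ ℝ. Then the rough Laplacian satisfies ∇*∇V = −(A+B)²·V; in particular, V is a critical point for the energy functional restricted to left-invariant vector fields of the same length (i.e., ∇*∇V is collinear to V). -/
/-!
Indices are shifted: `e 0, …, e 3` are the paper's `e₁, …, e₄`. Testing the Koszul formula
against the orthonormal frame gives `∇_{e 0} e 0 = (A + B) e 3`, `∇_{e i} e 0 = 0` for `i ≠ 0`,
`∇_{e 0} e 3 = -(A + B) e 0`, and shows that every `∇_{e i} e i` is a multiple of `e 3`.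
Hence in `∇*∇ e 0` only the term `∇_{e 0} ∇_{e 0} e 0 = (A + B) ∇_{e 0} e 3 = -(A + B)² e 0`
survives.
-/

open Module

section

variable {G : Type*} [AddCommGroup G] [Module ℝ G]

section Orthogonal

variable {ι : Type*} [Fintype ι] [DecidableEq ι] (e : Basis ι ℝ G) (g : G →ₗ[ℝ] G →ₗ[ℝ] ℝ)
  {s : ι → ℝ}

theorem apply_basis_eq_mul_repr (hg : ∀ i j, g (e i) (e j) = if i = j then s i else 0)
    (W : G) (k : ι) : g W (e k) = s k * e.repr W k := calc
  g W (e k) = ∑ i, e.repr W i * g (e i) (e k) := by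
    conv_lhs => rw [← e.sum_repr W]
    simp only [map_sum, map_smul, LinearMap.coe_sum, Finset.sum_apply, LinearMap.smul_apply,
      smul_eq_mul]
  _ = s k * e.repr W k := by simp [hg, mul_comm]

theorem eq_of_forall_apply_basis_eq (hg : ∀ i j, g (e i) (e j) = if i = j then s i else 0)
    (hs : ∀ i, s i ≠ 0) {W W' : G} (h : ∀ k, g W (e k) = g W' (e k)) : W = W' :=
  e.ext_elem fun k => mul_left_cancel₀ (hs k) <| by
    rw [← apply_basis_eq_mul_repr e g hg, ← apply_basis_eq_mul_repr e g hg, h]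

theorem eq_of_koszul {lie nabla : G →ₗ[ℝ] G →ₗ[ℝ] G}
    (hg : ∀ i j, g (e i) (e j) = if i = j then s i else 0) (hs : ∀ i, s i ≠ 0)
    (hK : ∀ X Y Z : G, 2 * g (nabla X Y) Z = g (lie X Y) Z - g (lie Y Z) X + g (lie Z X) Y)
    {X Y N : G}
    (h : ∀ k, g (lie X Y) (e k) - g (lie Y (e k)) X + g (lie (e k) X) Y = 2 * g N (e k)) :
    nabla X Y = N :=
  eq_of_forall_apply_basis_eq e g hg hs fun k => by linarith [hK X Y (e k), h k]

end Orthogonal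

noncomputable def roughLaplacian {ι : Type*} [Fintype ι] (e : Basis ι ℝ G) (eps : ι → ℝ)
    (nabla : G →ₗ[ℝ] G →ₗ[ℝ] G) (V : G) : G :=
  ∑ i, eps i • (nabla (e i) (nabla (e i) V) - nabla (nabla (e i) (e i)) V)

theorem roughLaplacian_smul {ι : Type*} [Fintype ι] (e : Basis ι ℝ G) (eps : ι → ℝ)
    (nabla : G →ₗ[ℝ] G →ₗ[ℝ] G) (a : ℝ) (V : G) :
    roughLaplacian e eps nabla (a • V) = a • roughLaplacian e eps nabla V := by
  simp only [roughLaplacian, map_smul, Finset.smul_sum, smul_sub, smul_comm a]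

def lorentzSign (i : Fin 4) : ℝ := if i = 2 then -1 else 1

theorem lorentzSign_ne_zero (i : Fin 4) : lorentzSign i ≠ 0 := by
  unfold lorentzSign; split_ifs <;> norm_num

/-- `c` stands for the paper's `ε √(A² + AB + B²)`. -/
structure StructureEquations (e : Basis (Fin 4) ℝ G) (lie : G →ₗ[ℝ] G →ₗ[ℝ] G) (A B c : ℝ) :
    Prop where
  anti : ∀ X Y, lie X Y = -lie Y X
  lie01 : lie (e 0) (e 1) = 0
  lie02 : lie (e 0) (e 2) = 0
  lie03 : lie (e 0) (e 3) = (-(A + B)) • e 0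
  lie12 : lie (e 1) (e 2) = 0
  lie13 : lie (e 1) (e 3) = B • e 1 - c • e 2
  lie23 : lie (e 2) (e 3) = c • e 1 + A • e 2

namespace StructureEquations

variable {e : Basis (Fin 4) ℝ G} {lie : G →ₗ[ℝ] G →ₗ[ℝ] G} {A B c : ℝ}
  (h : StructureEquations e lie A B c)
include h

theorem lie_self (X : G) : lie X X = 0 := by
  have h2 : (2 : ℝ) • lie X X = 0 := by
    rw [two_smul]; nth_rw 1 [h.anti]; exact neg_add_cancel _
  exact (smul_eq_zero.mp h2).resolve_left two_ne_zero

theorem lie_table :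
    lie (e 0) (e 1) = 0 ∧ lie (e 0) (e 2) = 0 ∧ lie (e 0) (e 3) = (-(A + B)) • e 0 ∧
    lie (e 1) (e 2) = 0 ∧ lie (e 1) (e 3) = B • e 1 - c • e 2 ∧
    lie (e 2) (e 3) = c • e 1 + A • e 2 ∧
    lie (e 1) (e 0) = 0 ∧ lie (e 2) (e 0) = 0 ∧ lie (e 3) (e 0) = (A + B) • e 0 ∧
    lie (e 2) (e 1) = 0 ∧ lie (e 3) (e 1) = c • e 2 - B • e 1 ∧
    lie (e 3) (e 2) = -(c • e 1) - A • e 2 := by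
  refine ⟨h.lie01, h.lie02, h.lie03, h.lie12, h.lie13, h.lie23, ?_, ?_, ?_, ?_, ?_, ?_⟩ <;>
    rw [h.anti] <;> simp only [h.lie01, h.lie02, h.lie03, h.lie12, h.lie13, h.lie23] <;> module

end StructureEquations

section LeviCivita

variable {e : Basis (Fin 4) ℝ G} {lie nabla : G →ₗ[ℝ] G →ₗ[ℝ] G} {g : G →ₗ[ℝ] G →ₗ[ℝ] ℝ}
  {A B c : ℝ} (hL : StructureEquations e lie A B c)
  (hg : ∀ i j, g (e i) (e j) = if i = j then lorentzSign i else 0)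
  (hK : ∀ X Y Z : G, 2 * g (nabla X Y) Z = g (lie X Y) Z - g (lie Y Z) X + g (lie Z X) Y)
include hL hg hK

theorem nabla_e0_e0 : nabla (e 0) (e 0) = (A + B) • e 3 :=
  eq_of_koszul e g hg lorentzSign_ne_zero hK fun k => by
    fin_cases k <;> simp [hL.lie_self, hL.lie_table, hg, lorentzSign]
    ring

theorem nabla_e1_e0 : nabla (e 1) (e 0) = 0 :=
  eq_of_koszul e g hg lorentzSign_ne_zero hK fun k => by
    fin_cases k <;> simp [hL.lie_self, hL.lie_table, hg]

theorem nabla_e2_e0 : nabla (e 2) (e 0) = 0 :=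
  eq_of_koszul e g hg lorentzSign_ne_zero hK fun k => by
    fin_cases k <;> simp [hL.lie_self, hL.lie_table, hg]

theorem nabla_e3_e0 : nabla (e 3) (e 0) = 0 :=
  eq_of_koszul e g hg lorentzSign_ne_zero hK fun k => by
    fin_cases k <;> simp [hL.lie_self, hL.lie_table, hg, lorentzSign]

theorem nabla_e0_e3 : nabla (e 0) (e 3) = (-(A + B)) • e 0 :=
  eq_of_koszul e g hg lorentzSign_ne_zero hK fun k => by
    fin_cases k <;> simp [hL.lie_self, hL.lie_table, hg, lorentzSign]
    ring

theorem nabla_e1_e1 : nabla (e 1) (e 1) = (-B) • e 3 :=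
  eq_of_koszul e g hg lorentzSign_ne_zero hK fun k => by
    fin_cases k <;> simp [hL.lie_self, hL.lie_table, hg, lorentzSign]
    ring

theorem nabla_e2_e2 : nabla (e 2) (e 2) = A • e 3 :=
  eq_of_koszul e g hg lorentzSign_ne_zero hK fun k => by
    fin_cases k <;> simp [hL.lie_self, hL.lie_table, hg, lorentzSign]
    ring

theorem nabla_e3_e3 : nabla (e 3) (e 3) = 0 :=
  eq_of_koszul e g hg lorentzSign_ne_zero hK fun k => by
    fin_cases k <;> simp [hL.lie_self, hL.lie_table, hg]

theorem roughLaplacian_e0 : roughLaplacian e lorentzSign nabla (e 0) = (-(A + B) ^ 2) • e 0 := by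
  simp only [roughLaplacian, Fin.sum_univ_four, nabla_e0_e0 hL hg hK, nabla_e1_e0 hL hg hK,
    nabla_e2_e0 hL hg hK, nabla_e3_e0 hL hg hK, nabla_e0_e3 hL hg hK, nabla_e1_e1 hL hg hK,
    nabla_e2_e2 hL hg hK, nabla_e3_e3 hL hg hK, map_smul, map_zero, LinearMap.smul_apply,
    LinearMap.zero_apply, lorentzSign, Fin.reduceEq, if_false]
  module

end LeviCivita

end

theorem stmt_6_general {G : Type*} [AddCommGroup G] [Module ℝ G]
    (e : Module.Basis (Fin 4) ℝ G)
    (lie : G →ₗ[ℝ] G →ₗ[ℝ] G)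
    (g : G →ₗ[ℝ] G →ₗ[ℝ] ℝ)
    (nabla : G →ₗ[ℝ] G →ₗ[ℝ] G)
    (A B ε a : ℝ)
    (hanti : ∀ X Y : G, lie X Y = - lie Y X)
    (h12 : lie (e 0) (e 1) = 0)
    (h13 : lie (e 0) (e 2) = 0)
    (h14 : lie (e 0) (e 3) = (-(A + B)) • e 0)
    (h23 : lie (e 1) (e 2) = 0)
    (h24 : lie (e 1) (e 3) = B • e 1 - (ε * Real.sqrt (A ^ 2 + A * B + B ^ 2)) • e 2)
    (h34 : lie (e 2) (e 3) = (ε * Real.sqrt (A ^ 2 + A * B + B ^ 2)) • e 1 + A • e 2)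
    (hg : ∀ i j : Fin 4, g (e i) (e j) = if i = j then (if i = 2 then (-1 : ℝ) else 1) else 0)
    (hK : ∀ X Y Z : G, 2 * g (nabla X Y) Z = g (lie X Y) Z - g (lie Y Z) X + g (lie Z X) Y) :
    (let eps : Fin 4 → ℝ := fun i => if i = (2 : Fin 4) then (-1 : ℝ) else 1
     let lap : G → G := fun V : G => ∑ i : Fin 4, eps i • (nabla (e i) (nabla (e i) V) - nabla (nabla (e i) (e i)) V)
     let V : G := a • e 0
     lap V = (-(A + B) ^ 2) • V ∧ ∃ lam : ℝ, lap V = lam • V) := by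
  intro eps lap V
  have hlap : lap V = (-(A + B) ^ 2) • V := by
    change roughLaplacian e lorentzSign nabla (a • e 0) = _
    rw [roughLaplacian_smul, roughLaplacian_e0 ⟨hanti, h12, h13, h14, h23, h24, h34⟩ hg hK,
      smul_comm]
  exact ⟨hlap, _, hlap⟩

theorem stmt_6 {G : Type*} [AddCommGroup G] [Module ℝ G]
    (e : Module.Basis (Fin 4) ℝ G)
    (lie : G →ₗ[ℝ] G →ₗ[ℝ] G)
    (g : G →ₗ[ℝ] G →ₗ[ℝ] ℝ)
    (nabla : G →ₗ[ℝ] G →ₗ[ℝ] G)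
    (A B ε a : ℝ) (hε : ε = 1 ∨ ε = -1)
    (hanti : ∀ X Y : G, lie X Y = - lie Y X)
    (h12 : lie (e 0) (e 1) = 0)
    (h13 : lie (e 0) (e 2) = 0)
    (h14 : lie (e 0) (e 3) = (-(A + B)) • e 0)
    (h23 : lie (e 1) (e 2) = 0)
    (h24 : lie (e 1) (e 3) = B • e 1 - (ε * Real.sqrt (A ^ 2 + A * B + B ^ 2)) • e 2)
    (h34 : lie (e 2) (e 3) = (ε * Real.sqrt (A ^ 2 + A * B + B ^ 2)) • e 1 + A • e 2)
    (hg : ∀ i j : Fin 4, g (e i) (e j) = if i = j then (if i = 2 then (-1 : ℝ) else 1) else 0)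
    (hgsymm : ∀ X Y : G, g X Y = g Y X)
    (hK : ∀ X Y Z : G, 2 * g (nabla X Y) Z = g (lie X Y) Z - g (lie Y Z) X + g (lie Z X) Y) :
    (let eps : Fin 4 → ℝ := fun i => if i = (2 : Fin 4) then (-1 : ℝ) else 1
     let lap : G → G := fun V : G => ∑ i : Fin 4, eps i • (nabla (e i) (nabla (e i) V) - nabla (nabla (e i) (e i)) V)
     let V : G := a • e 0
     lap V = (-(A + B) ^ 2) • V ∧ ∃ lam : ℝ, lap V = lam • V) :=
  stmt_6_general e lie g nabla A B ε a hanti h12 h13 h14 h23 h24 h34 hg hK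
end

section
/- Suppose (A+B)² + C² ≠ 0. A left-invariant vector field V = a e₁ + b e₂ + c e₃ + d e₄ (a,b,c,d ∈ ℝ) defines a harmonic map (i.e., ∇*∇V = 0 and Σ_{i=1}^{4} εᵢ R(∇_{eᵢ}V, V)eᵢ = 0) if and only if d = −c. -/
/-!
Indices are 0-based: `u 2`, `u 3` are the null vectors u₃, u₄, dual to each other under the metric.
Pairing with this dual basis, the Koszul formula determines every `∇_{u i} u j` from the structure
constants. Substituting that table, at `V = x₀ u 0 + x₁ u 1 + x₂ u 2 + x₃ u 3` both tensors are
multiples of `u 2`: `∇*∇ V = -x₃ (C² + 2B² + ε²(A+B)²/2) u 2` and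
`∑ εᵢ R(∇_{eᵢ}V, V)eᵢ = C x₃² (ε²(A+B)²/4 - B²) u 2`. The factor `C² + 2B² + (A+B)²/2` is positive as
`(A+B)² + C² ≠ 0`, and `x₃ = c + d` in frame coordinates, so `V` is harmonic exactly when `d = -c`.
-/

open Module

section Connection

variable {G : Type*} [AddCommGroup G] [Module ℝ G]

def curvature (lie nabla : G →ₗ[ℝ] G →ₗ[ℝ] G) (X Y Z : G) : G :=
  nabla (lie X Y) Z - nabla X (nabla Y Z) + nabla Y (nabla X Z)

def connectionLaplacian {n : ℕ} (nabla : G →ₗ[ℝ] G →ₗ[ℝ] G) (eps : Fin n → ℝ) (e : Fin n → G)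
    (V : G) : G :=
  ∑ i, eps i • (nabla (e i) (nabla (e i) V) - nabla (nabla (e i) (e i)) V)

def curvatureTrace {n : ℕ} (lie nabla : G →ₗ[ℝ] G →ₗ[ℝ] G) (eps : Fin n → ℝ) (e : Fin n → G)
    (V : G) : G :=
  ∑ i, eps i • curvature lie nabla (nabla (e i) V) V (e i)

lemma apply_self_eq_zero_of_antisymm {f : G →ₗ[ℝ] G →ₗ[ℝ] G} (hanti : ∀ X Y, f X Y = - f Y X)
    (X : G) : f X X = 0 := by
  have h : (2 : ℝ) • f X X = 0 := by
    rw [two_smul]; nth_rewrite 2 [hanti]; exact add_neg_cancel _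
  exact (smul_eq_zero.mp h).resolve_left two_ne_zero

end Connection

noncomputable section LieAlgebra

variable {G : Type*} [AddCommGroup G] [Module ℝ G] (u : Fin 4 → G) (A B C D E ε : ℝ)

def structureBrackets : Fin 4 → Fin 4 → G :=
  ![![0, (ε * (A + B)) • u 2, 0, C • u 0 + B • u 1 + D • u 2],
    ![-((ε * (A + B)) • u 2), 0, 0, B • u 0 + E • u 2],
    ![0, 0, 0, C • u 2],
    ![-(C • u 0 + B • u 1 + D • u 2), -(B • u 0 + E • u 2), -(C • u 2), 0]]

def leviCivitaTable : Fin 4 → Fin 4 → G :=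
  ![![(-C) • u 2, (ε * (A + B) / 2 - B) • u 2, 0, C • u 0 + (B - ε * (A + B) / 2) • u 1],
    ![(-B - ε * (A + B) / 2) • u 2, 0, 0, (B + ε * (A + B) / 2) • u 0],
    ![0, 0, 0, 0],
    ![(-(ε * (A + B) / 2)) • u 1 + (-D) • u 2, (ε * (A + B) / 2) • u 0 + (-E) • u 2, (-C) • u 2,
      D • u 0 + E • u 1 + C • u 3]]

def lorentzGram (i j : Fin 4) : ℝ :=
  if (i = 0 ∧ j = 0) ∨ (i = 1 ∧ j = 1) ∨ (i = 2 ∧ j = 3) ∨ (i = 3 ∧ j = 2) then 1 else 0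

def lorentzFrame : Fin 4 → G := ![u 0, u 1, (-(1/2 : ℝ)) • u 2 + u 3, (1/2 : ℝ) • u 2 + u 3]

def lorentzSigns : Fin 4 → ℝ := fun i => if i = 2 then -1 else 1

lemma lorentzFrame_combination (a b c d : ℝ) :
    a • lorentzFrame u 0 + b • lorentzFrame u 1 + c • lorentzFrame u 2 + d • lorentzFrame u 3 =
      a • u 0 + b • u 1 + ((d - c) / 2) • u 2 + (c + d) • u 3 := by
  simp only [lorentzFrame, Matrix.cons_val_zero, Matrix.cons_val_one, Matrix.cons_val_two,
    Matrix.cons_val_three, Matrix.head_cons, Matrix.tail_cons]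
  module

end LieAlgebra

section Computation

variable {G : Type*} [AddCommGroup G] [Module ℝ G] {u : Fin 4 → G}
  {lie nabla : G →ₗ[ℝ] G →ₗ[ℝ] G} {g : G →ₗ[ℝ] G →ₗ[ℝ] ℝ} {A B C D E ε : ℝ}

lemma lie_basis_eq (hanti : ∀ X Y : G, lie X Y = - lie Y X)
    (h12 : lie (u 0) (u 1) = (ε * (A + B)) • u 2)
    (h13 : lie (u 0) (u 2) = 0)
    (h14 : lie (u 0) (u 3) = C • u 0 + B • u 1 + D • u 2)
    (h23 : lie (u 1) (u 2) = 0)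
    (h24 : lie (u 1) (u 3) = B • u 0 + E • u 2)
    (h34 : lie (u 2) (u 3) = C • u 2) (i j : Fin 4) :
    lie (u i) (u j) = structureBrackets u A B C D E ε i j := by
  fin_cases i <;> fin_cases j <;>
    simp [structureBrackets, apply_self_eq_zero_of_antisymm hanti, hanti (u 1) (u 0),
      hanti (u 2) (u 0), hanti (u 3) (u 0), hanti (u 2) (u 1), hanti (u 3) (u 1), hanti (u 3) (u 2),
      h12, h13, h14, h23, h24, h34]

lemma Module.Basis.eq_sum_smul_of_lorentzGram {u : Basis (Fin 4) ℝ G}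
    (hg : ∀ i j, g (u i) (u j) = lorentzGram i j) (W : G) :
    W = g W (u 0) • u 0 + g W (u 1) • u 1 + g W (u 3) • u 2 + g W (u 2) • u 3 := by
  obtain ⟨x, rfl⟩ : ∃ x : Fin 4 → ℝ, ∑ i, x i • u i = W := ⟨_, u.sum_repr W⟩
  simp [Fin.sum_univ_four, hg, lorentzGram]

lemma nabla_basis_eq {u : Basis (Fin 4) ℝ G}
    (hlie : ∀ i j, lie (u i) (u j) = structureBrackets u A B C D E ε i j)
    (hg : ∀ i j, g (u i) (u j) = lorentzGram i j)
    (hK : ∀ X Y Z : G, 2 * g (nabla X Y) Z = g (lie X Y) Z - g (lie Y Z) X + g (lie Z X) Y)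
    (i j : Fin 4) : nabla (u i) (u j) = leviCivitaTable u A B C D E ε i j := by
  have koszul (X Y Z : G) :
      g (nabla X Y) Z = (g (lie X Y) Z - g (lie Y Z) X + g (lie Z X) Y) / 2 := by
    linarith [hK X Y Z]
  rw [u.eq_sum_smul_of_lorentzGram hg (nabla _ _)]
  fin_cases i <;> fin_cases j <;>
    simp [koszul, hlie, structureBrackets, leviCivitaTable, hg, lorentzGram] <;> module

lemma connectionLaplacian_eq (hnabla : ∀ i j, nabla (u i) (u j) = leviCivitaTable u A B C D E ε i j)
    (x₀ x₁ x₂ x₃ : ℝ) :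
    connectionLaplacian nabla lorentzSigns (lorentzFrame u) (x₀ • u 0 + x₁ • u 1 + x₂ • u 2 + x₃ • u 3) =
      (-x₃ * (C ^ 2 + 2 * B ^ 2 + ε ^ 2 * (A + B) ^ 2 / 2)) • u 2 := by
  simp only [connectionLaplacian, lorentzSigns, Fin.isValue, lorentzFrame, one_div, neg_smul, map_add, map_smul,
    ite_smul, one_smul, neg_sub, Fin.sum_univ_four, Fin.reduceEq, ↓reduceIte, Matrix.cons_val_zero, hnabla,
    leviCivitaTable, Matrix.cons_val', Matrix.cons_val_fin_one, map_neg, Matrix.cons_val, smul_zero, neg_zero,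
    Matrix.cons_val_one, add_zero, map_zero, smul_neg, smul_add, zero_add, LinearMap.neg_apply, LinearMap.smul_apply,
    sub_zero, LinearMap.zero_apply, LinearMap.add_apply, neg_neg, neg_add_rev, neg_mul]
  match_scalars <;> ring

lemma curvatureTrace_eq (hlie : ∀ i j, lie (u i) (u j) = structureBrackets u A B C D E ε i j)
    (hnabla : ∀ i j, nabla (u i) (u j) = leviCivitaTable u A B C D E ε i j)
    (x₀ x₁ x₂ x₃ : ℝ) :
    curvatureTrace lie nabla lorentzSigns (lorentzFrame u) (x₀ • u 0 + x₁ • u 1 + x₂ • u 2 + x₃ • u 3) =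
      (C * x₃ ^ 2 * (ε ^ 2 * (A + B) ^ 2 / 4 - B ^ 2)) • u 2 := by
  simp only [curvatureTrace, lorentzSigns, Fin.isValue, curvature, lorentzFrame, one_div, neg_smul, map_add,
    map_smul, LinearMap.add_apply, LinearMap.smul_apply, smul_add, ite_smul, one_smul, neg_sub, Fin.sum_univ_four,
    Fin.reduceEq, ↓reduceIte, Matrix.cons_val_zero, hnabla, leviCivitaTable, Matrix.cons_val', Matrix.cons_val_fin_one,
    map_neg, LinearMap.neg_apply, hlie, structureBrackets, neg_add_rev, Matrix.cons_val, Matrix.cons_val_one, smul_zero,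
    neg_zero, map_zero, LinearMap.zero_apply, add_zero, smul_neg, zero_add, sub_neg_eq_add, neg_neg]
  match_scalars <;> ring

end Computation

theorem stmt_16_general {G : Type*} [AddCommGroup G] [Module ℝ G]
    (u : Module.Basis (Fin 4) ℝ G)
    (lie : G →ₗ[ℝ] G →ₗ[ℝ] G)
    (g : G →ₗ[ℝ] G →ₗ[ℝ] ℝ)
    (nabla : G →ₗ[ℝ] G →ₗ[ℝ] G)
    (A B C D E ε : ℝ) (hε : ε = 1 ∨ ε = -1)
    (hne : (A + B) ^ 2 + C ^ 2 ≠ 0)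
    (hanti : ∀ X Y : G, lie X Y = - lie Y X)
    (h12 : lie (u 0) (u 1) = (ε * (A + B)) • u 2)
    (h13 : lie (u 0) (u 2) = 0)
    (h14 : lie (u 0) (u 3) = C • u 0 + B • u 1 + D • u 2)
    (h23 : lie (u 1) (u 2) = 0)
    (h24 : lie (u 1) (u 3) = B • u 0 + E • u 2)
    (h34 : lie (u 2) (u 3) = C • u 2)
    (hg : ∀ i j : Fin 4, g (u i) (u j) =
      if (i = 0 ∧ j = 0) ∨ (i = 1 ∧ j = 1) ∨ (i = 2 ∧ j = 3) ∨ (i = 3 ∧ j = 2) then (1 : ℝ) else 0)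
    (hK : ∀ X Y Z : G, 2 * g (nabla X Y) Z = g (lie X Y) Z - g (lie Y Z) X + g (lie Z X) Y) :
    (let eps : Fin 4 → ℝ := fun i => if i = (2 : Fin 4) then (-1 : ℝ) else 1
     let ef : Fin 4 → G := ![u 0, u 1, (-(1/2 : ℝ)) • u 2 + u 3, ((1/2 : ℝ)) • u 2 + u 3]
     let lap : G → G := fun V : G => ∑ i : Fin 4, eps i • (nabla (ef i) (nabla (ef i) V) - nabla (nabla (ef i) (ef i)) V)
     let tr : G → G := fun V : G => ∑ i : Fin 4, eps i • (nabla (lie (nabla (ef i) V) V) (ef i) - nabla (nabla (ef i) V) (nabla V (ef i)) + nabla V (nabla (nabla (ef i) V) (ef i)))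
     ∀ a b c d : ℝ,
       ((lap (a • ef 0 + b • ef 1 + c • ef 2 + d • ef 3) = 0 ∧
         tr (a • ef 0 + b • ef 1 + c • ef 2 + d • ef 3) = 0) ↔ d = -c)) := by
  intro eps ef lap tr a b c d
  have hV : a • ef 0 + b • ef 1 + c • ef 2 + d • ef 3 = _ := lorentzFrame_combination u a b c d
  have hlie := lie_basis_eq (u := ⇑u) hanti h12 h13 h14 h23 h24 h34
  have hnabla := nabla_basis_eq hlie hg hK
  have hpos : 0 < C ^ 2 + 2 * B ^ 2 + ε ^ 2 * (A + B) ^ 2 / 2 := by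
    have hε2 : ε ^ 2 = 1 := by rcases hε with rfl | rfl <;> norm_num
    have : 0 < (A + B) ^ 2 + C ^ 2 := lt_of_le_of_ne (by positivity) hne.symm
    nlinarith [sq_nonneg B]
  change connectionLaplacian nabla lorentzSigns (lorentzFrame u) _ = 0 ∧
    curvatureTrace lie nabla lorentzSigns (lorentzFrame u) _ = 0 ↔ _
  rw [hV, connectionLaplacian_eq hnabla, curvatureTrace_eq hlie hnabla]
  simp only [smul_eq_zero, u.ne_zero 2, or_false]
  constructor
  · rintro ⟨hlap, -⟩
    linarith [(mul_eq_zero.mp hlap).resolve_right hpos.ne']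
  · intro rfl
    constructor <;> ring

theorem stmt_16 {G : Type*} [AddCommGroup G] [Module ℝ G]
    (u : Module.Basis (Fin 4) ℝ G)
    (lie : G →ₗ[ℝ] G →ₗ[ℝ] G)
    (g : G →ₗ[ℝ] G →ₗ[ℝ] ℝ)
    (nabla : G →ₗ[ℝ] G →ₗ[ℝ] G)
    (A B C D E ε : ℝ) (hε : ε = 1 ∨ ε = -1)
    (hne : (A + B) ^ 2 + C ^ 2 ≠ 0)
    (hanti : ∀ X Y : G, lie X Y = - lie Y X)
    (h12 : lie (u 0) (u 1) = (ε * (A + B)) • u 2)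
    (h13 : lie (u 0) (u 2) = 0)
    (h14 : lie (u 0) (u 3) = C • u 0 + B • u 1 + D • u 2)
    (h23 : lie (u 1) (u 2) = 0)
    (h24 : lie (u 1) (u 3) = B • u 0 + E • u 2)
    (h34 : lie (u 2) (u 3) = C • u 2)
    (hg : ∀ i j : Fin 4, g (u i) (u j) =
      if (i = 0 ∧ j = 0) ∨ (i = 1 ∧ j = 1) ∨ (i = 2 ∧ j = 3) ∨ (i = 3 ∧ j = 2) then (1 : ℝ) else 0)
    (hgsymm : ∀ X Y : G, g X Y = g Y X)
    (hK : ∀ X Y Z : G, 2 * g (nabla X Y) Z = g (lie X Y) Z - g (lie Y Z) X + g (lie Z X) Y) :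
    (let eps : Fin 4 → ℝ := fun i => if i = (2 : Fin 4) then (-1 : ℝ) else 1
     let ef : Fin 4 → G := ![u 0, u 1, (-(1/2 : ℝ)) • u 2 + u 3, ((1/2 : ℝ)) • u 2 + u 3]
     let lap : G → G := fun V : G => ∑ i : Fin 4, eps i • (nabla (ef i) (nabla (ef i) V) - nabla (nabla (ef i) (ef i)) V)
     let tr : G → G := fun V : G => ∑ i : Fin 4, eps i • (nabla (lie (nabla (ef i) V) V) (ef i) - nabla (nabla (ef i) V) (nabla V (ef i)) + nabla V (nabla (nabla (ef i) V) (ef i)))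
     ∀ a b c d : ℝ,
       ((lap (a • ef 0 + b • ef 1 + c • ef 2 + d • ef 3) = 0 ∧
         tr (a • ef 0 + b • ef 1 + c • ef 2 + d • ef 3) = 0) ↔ d = -c)) :=
  stmt_16_general u lie g nabla A B C D E ε hε hne hanti h12 h13 h14 h23 h24 h34 hg hK
end
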